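/- The sequential compound 1 → ∗ has game value equal to ↓ (the game {∗ | 0}), i.e., 1 → ∗ = ↓. -/

import Mathlib

/-! Combinatorial game theory (`SetTheory.PGame`) has been removed from Mathlib.
The definitions below restore the parts of the old Mathlib API used here,
with their old meaning. -/

namespace SetTheory

universe u

/-- Pre-games, as in the old Mathlib `SetTheory.PGame`. -/
inductive PGame : Type (u + 1)
  | mk : ∀ α β : Type u, (α → PGame) → (β → PGame) → PGame

namespace PGame

/-- The indexing type for allowable moves by Left. -/
def LeftMoves : PGame → Type u
  | mk l _ _ _ => l

/-- The indexing type for allowable moves by Right. -/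
def RightMoves : PGame → Type u
  | mk _ r _ _ => r

/-- The new game after Left makes an allowed move. -/
def moveLeft : ∀ g : PGame, LeftMoves g → PGame
  | mk _ _ L _ => L

/-- The new game after Right makes an allowed move. -/
def moveRight : ∀ g : PGame, RightMoves g → PGame
  | mk _ _ _ R => R

/-- Auxiliary recursion on the second argument for `leLF`. -/
def leLFAux {xl xr : Type u} (IHl : xl → PGame.{u} → Prop × Prop)
    (IHr : xr → PGame.{u} → Prop × Prop) : PGame.{u} → Prop × Prop
  | mk yl yr yL yR =>
    ((∀ i, (IHl i (mk yl yr yL yR)).2) ∧ ∀ j, (leLFAux IHl IHr (yR j)).2,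
      (∃ i, (leLFAux IHl IHr (yL i)).1) ∨ ∃ j, (IHr j (mk yl yr yL yR)).1)

/-- Simultaneous definition of `≤` and `⧏` on pre-games:
`(leLF x y).1 ↔ x ≤ y` and `(leLF x y).2 ↔ x ⧏ y`. -/
def leLF : PGame.{u} → PGame.{u} → Prop × Prop
  | mk _ _ xL xR => leLFAux (fun i => leLF (xL i)) (fun j => leLF (xR j))

instance : LE PGame :=
  ⟨fun x y => (leLF x y).1⟩

/-- Equivalence of pre-games: `x ≤ y ∧ y ≤ x`. -/
def Equiv (x y : PGame) : Prop :=
  x ≤ y ∧ y ≤ x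

instance : HasEquiv PGame :=
  ⟨Equiv⟩

instance : Zero PGame :=
  ⟨⟨PEmpty, PEmpty, PEmpty.elim, PEmpty.elim⟩⟩

/-- Negation of a pre-game. -/
def neg : PGame → PGame
  | mk l r L R => mk r l (fun i => neg (R i)) (fun i => neg (L i))

instance : Neg PGame :=
  ⟨neg⟩

/-- Auxiliary recursion on the second argument for `add`. -/
def addAux {xl xr : Type u} (IHl : xl → PGame.{u} → PGame.{u})
    (IHr : xr → PGame.{u} → PGame.{u}) : PGame.{u} → PGame.{u}
  | mk yl yr yL yR =>
    mk (xl ⊕ yl) (xr ⊕ yr)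
      (Sum.elim (fun i => IHl i (mk yl yr yL yR)) (fun i => addAux IHl IHr (yL i)))
      (Sum.elim (fun i => IHr i (mk yl yr yL yR)) (fun i => addAux IHl IHr (yR i)))

/-- Disjunctive sum of pre-games. -/
def add : PGame.{u} → PGame.{u} → PGame.{u}
  | mk _ _ xL xR => addAux (fun i => add (xL i)) (fun i => add (xR i))

instance : Add PGame :=
  ⟨add⟩

instance : Sub PGame :=
  ⟨fun x y => x + -y⟩

/-- The pre-game `star = {0 | 0}`. -/
def star : PGame :=
  ⟨PUnit, PUnit, fun _ => 0, fun _ => 0⟩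

end PGame

end SetTheory

open SetTheory

open scoped PGame

namespace SeqCompound

open Classical in
/-- The sequential compound `G → H` of two pregames. -/
noncomputable def seqc : PGame → PGame → PGame
  | PGame.mk α β L R, H =>
    if Nonempty α then
      if Nonempty β then
        PGame.mk α β (fun a => seqc (L a) H) (fun b => seqc (R b) H)
      else
        PGame.mk α H.RightMoves (fun a => seqc (L a) H) H.moveRight
    else
      if Nonempty β then
        PGame.mk H.LeftMoves β H.moveLeft (fun b => seqc (R b) H)
      else H

/-- A pregame is dicotic (all-small) if in every subposition,
Left has an option iff Right has an option. -/
def Dicotic : PGame → Prop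
  | PGame.mk α β L R =>
    (Nonempty α ↔ Nonempty β) ∧ (∀ a, Dicotic (L a)) ∧ (∀ b, Dicotic (R b))

/-- The canonical nonnegative integer game `{n-1 | }`. -/
def intGame : ℕ → PGame
  | 0 => 0
  | n + 1 => PGame.mk PUnit PEmpty (fun _ => intGame n) PEmpty.elim

/-- `upSum k` is the disjunctive sum `↑¹ + ↑² + ⋯ + ↑ᵏ`. -/
def upSum : ℕ → PGame
  | 0 => 0
  | k + 1 => upSum k +
      PGame.mk PUnit PUnit (fun _ => 0) (fun _ => PGame.star - upSum k)

/-- `upPow k` is the game `↑^(k+1) = {0 | ∗ - (↑¹ + ⋯ + ↑ᵏ)}`. -/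
def upPow (k : ℕ) : PGame :=
  PGame.mk PUnit PUnit (fun _ => 0) (fun _ => PGame.star - upSum k)

/-- Sequential compound of a list of games. -/
noncomputable def seqList : List PGame → PGame
  | [] => 0
  | G :: l => seqc G (seqList l)

end SeqCompound

namespace SeqCompound

/-- The game `↓ = {∗ | 0}`. -/
def down : PGame := PGame.mk PUnit PUnit (fun _ => PGame.star) fun _ => 0

end SeqCompound

namespace SetTheory.PGame

def LF (x y : PGame) : Prop := (leLF x y).2

theorem le_iff_forall_lf {x y : PGame} :
    x ≤ y ↔ (∀ i, LF (x.moveLeft i) y) ∧ ∀ j, LF x (y.moveRight j) := by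
  cases x; cases y; rfl

theorem lf_of_le_moveLeft {x y : PGame} {i : y.LeftMoves} (h : x ≤ y.moveLeft i) : LF x y := by
  cases x; cases y; exact Or.inl ⟨i, h⟩

theorem lf_of_moveRight_le {x y : PGame} {j : x.RightMoves} (h : x.moveRight j ≤ y) : LF x y := by
  cases x; cases y; exact Or.inr ⟨j, h⟩

theorem le_refl : ∀ x : PGame, x ≤ x
  | mk _ _ xL xR => le_iff_forall_lf.2
      ⟨fun i => lf_of_le_moveLeft (le_refl (xL i)), fun j => lf_of_moveRight_le (le_refl (xR j))⟩

theorem equiv_refl (x : PGame) : x ≈ x :=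
  ⟨le_refl x, le_refl x⟩

end SetTheory.PGame

namespace SeqCompound

universe u

theorem seqc_of_isEmpty {α β : Type u} [IsEmpty α] [IsEmpty β] (L : α → PGame) (R : β → PGame)
    (H : PGame) : seqc (PGame.mk α β L R) H = H := by
  rw [seqc, if_neg (not_nonempty_iff.2 ‹_›), if_neg (not_nonempty_iff.2 ‹_›)]

theorem seqc_of_isEmpty_rightMoves {α β : Type u} [Nonempty α] [IsEmpty β] (L : α → PGame)
    (R : β → PGame) (H : PGame) :
    seqc (PGame.mk α β L R) H = PGame.mk α H.RightMoves (fun a => seqc (L a) H) H.moveRight := by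
  rw [seqc, if_pos ‹_›, if_neg (not_nonempty_iff.2 ‹_›)]

theorem zero_seqc (H : PGame) : seqc 0 H = H :=
  seqc_of_isEmpty (α := PEmpty) _ _ H

theorem seqc_intGame_succ (n : ℕ) (H : PGame) :
    seqc (intGame (n + 1)) H =
      PGame.mk PUnit H.RightMoves (fun _ => seqc (intGame n) H) H.moveRight :=
  seqc_of_isEmpty_rightMoves (α := PUnit) (β := PEmpty) _ _ H

/-- `1 → ∗ = ↓` as game values. -/
theorem one_seqc_star : seqc (intGame 1) PGame.star ≈ down := by
  have h : seqc (intGame 1) PGame.star = down := by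
    rw [seqc_intGame_succ, intGame, zero_seqc]
    rfl
  exact h ▸ PGame.equiv_refl down

end SeqCompound
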